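/- arXiv:2507.18229 — 2 statements merged into one kernel-verified Lean document; each statement's English description precedes it below -/
import Mathlib

section
/- Let λ > 0, c > 0, q > 0, l > 0, v > 0, and suppose θ′ > 0 (the agent's vacancies raise market tightness), w_θ > 0 (the wage is strictly increasing in tightness), q′ < 0 (the vacancy-filling probability is strictly decreasing in tightness), and the denominator D := q/λ + (v/λ)·q′·θ′ is strictly positive. Then the manipulator's required marginal surplus strictly exceeds the tightness-taker's: (c + θ′·l·w_θ) / D > λ·c/q. -/
/-- the market manipulator's required marginal surplus
`(c + θ′·l·w_θ)/D`, with `D := q/λ + (v/λ)·q′·θ′ > 0`, strictly exceeds the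
tightness-taker's `λ·c/q` whenever `θ′ > 0`, `w_θ > 0`, and `q′ < 0`. -/
theorem manipulator_surplus_exceeds_taker
    (lam c q l v θ' w_θ q' : ℝ)
    (hlam : 0 < lam) (hc : 0 < c) (hq : 0 < q) (hl : 0 < l) (hv : 0 < v)
    (hθ' : 0 < θ') (hwθ : 0 < w_θ) (hq' : q' < 0)
    (hD : 0 < q / lam + (v / lam) * q' * θ') :
    (c + θ' * l * w_θ) / (q / lam + (v / lam) * q' * θ') > lam * c / q := by
  have hDlt : q / lam + (v / lam) * q' * θ' < q / lam := by
    have : (v / lam) * q' * θ' < 0 := by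
      exact mul_neg_of_neg_of_pos (mul_neg_of_pos_of_neg (div_pos hv hlam) hq') hθ'
    linarith
  have h1 : lam * c / q = c / (q / lam) := by
    field_simp
  calc lam * c / q = c / (q / lam) := h1
    _ < c / (q / lam + (v / lam) * q' * θ') := by
        apply div_lt_div_of_pos_left hc hD hDlt
    _ ≤ (c + θ' * l * w_θ) / (q / lam + (v / lam) * q' * θ') := by
        gcongr
        nlinarith [mul_pos (mul_pos hθ' hl) hwθ]
end

section
/- Let r > 0, λ > 0, c > 0, q > 0, θ ∈ ℝ be fixed, let f and w(·, θ) be differentiable functions of l, and define c_eff := (1 + r/λ)·c and, for v > 0, l(v) := q·v/λ and F(v) := f(l(v)) − w(l(v), θ)·l(v) − c_eff·v. Then F′(v) = 0 if and only if f′(l(v)) − w(l(v), θ) − w_l(l(v), θ)·l(v) = (r + λ)·c/q, where w_l denotes the partial derivative of w with respect to l. That is, the tightness-taking firm's steady-state first-order condition under the calibrated cost c_eff is exactly the economic job-creation condition. -/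
/-! With `q` held fixed, `l(v) = (q/λ)·v` is linear, so the chain rule gives
`F′(v) = (q/λ)·(f′(l) − w(l) − w_l(l)·l) − c_eff`. Dividing the capitalised cost by the
slope `q/λ` gives `(1 + r/λ)·c·λ/q = (r + λ)·c/q`, the right-hand side of the job-creation
condition. -/

theorem HasDerivAt.steadyStateProfit {f g l : ℝ → ℝ} {f' g' a c v : ℝ}
    (hf : HasDerivAt f f' (l v)) (hg : HasDerivAt g g' (l v)) (hl : HasDerivAt l a v) :
    HasDerivAt (fun v => f (l v) - g (l v) * l v - c * v)
      (a * (f' - g (l v) - g' * l v) - c) v := by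
  refine (((hf.comp v hl).sub ((hg.comp v hl).mul hl)).sub
    ((hasDerivAt_id v).const_mul c)).congr_deriv ?_
  simp only [Function.comp_apply]
  ring

theorem calibrated_cost_div_slope {r lam c q : ℝ} (hlam : lam ≠ 0) :
    (1 + r / lam) * c / (q / lam) = (r + lam) * c / q := by
  field_simp
  ring

theorem calibrated_cost_recovers_job_creation_general
    (r lam c q θ : ℝ) (hlam : 0 < lam) (hq : 0 < q)
    (f : ℝ → ℝ) (w : ℝ × ℝ → ℝ)
    (hf : Differentiable ℝ f)
    (hw : Differentiable ℝ (fun x : ℝ => w (x, θ)))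
    (c_eff : ℝ) (hceff : c_eff = (1 + r / lam) * c)
    (l : ℝ → ℝ) (hl : l = fun v : ℝ => q * v / lam)
    (F : ℝ → ℝ)
    (hF : F = fun v : ℝ => f (l v) - w (l v, θ) * l v - c_eff * v) :
    ∀ v : ℝ, 0 < v →
      (deriv F v = 0 ↔
        deriv f (l v) - w (l v, θ)
            - deriv (fun x : ℝ => w (x, θ)) (l v) * l v
          = (r + lam) * c / q) := by
  intro v _
  have hslope : HasDerivAt l (q / lam) v := by
    subst hl
    simpa only [mul_div_right_comm, mul_one] using (hasDerivAt_id' v).const_mul (q / lam)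
  subst hF hceff
  rw [((hf _).hasDerivAt.steadyStateProfit (hw _).hasDerivAt hslope).deriv, sub_eq_zero,
    ← calibrated_cost_div_slope hlam.ne', eq_div_iff (div_pos hq hlam).ne', mul_comm]

/-- under the calibrated cost `c_eff := (1 + r/λ)·c`, with tightness
(hence `q`) fixed and steady-state employment `l(v) = q·v/λ`, the tightness-taking
firm's first-order condition `F′(v) = 0` for
`F(v) = f(l(v)) − w(l(v), θ)·l(v) − c_eff·v` is exactly the economic job-creation
condition `f′(l) − w(l, θ) − w_l·l = (r + λ)·c/q`. -/
theorem calibrated_cost_recovers_job_creation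
    (r lam c q θ : ℝ) (hr : 0 < r) (hlam : 0 < lam) (hc : 0 < c) (hq : 0 < q)
    (f : ℝ → ℝ) (w : ℝ × ℝ → ℝ)
    (hf : Differentiable ℝ f)
    (hw : Differentiable ℝ (fun x : ℝ => w (x, θ)))
    (c_eff : ℝ) (hceff : c_eff = (1 + r / lam) * c)
    (l : ℝ → ℝ) (hl : l = fun v : ℝ => q * v / lam)
    (F : ℝ → ℝ)
    (hF : F = fun v : ℝ => f (l v) - w (l v, θ) * l v - c_eff * v) :
    ∀ v : ℝ, 0 < v →
      (deriv F v = 0 ↔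
        deriv f (l v) - w (l v, θ)
            - deriv (fun x : ℝ => w (x, θ)) (l v) * l v
          = (r + lam) * c / q) :=
  calibrated_cost_recovers_job_creation_general r lam c q θ hlam hq f w hf hw c_eff hceff l hl F hF
end
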